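/- Under the setting of the piecewise-constant estimation law: if σ̂(iT) = −Φ(T)⁻¹ e^{A_e T} x̃(iT) with Φ(T) = A_e⁻¹(e^{A_e T} − I), and x̃ solves x̃'(t) = A_e x̃(t) + σ̂(iT) − B η(t) − B_u w(t) on [iT, (i+1)T], then x̃((i+1)T) = −∫₀^T e^{A_e(T−ξ)} (B η(iT+ξ) + B_u w(iT+ξ)) dξ. -/

import Mathlib

/-- with the piecewise-constant estimation law
`σ̂(iT) = −Φ(T)⁻¹ e^{A_e T} x̃(iT)`, `Φ(T) = A_e⁻¹(e^{A_e T} − I)`, the prediction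
error at the next sample satisfies
`x̃((i+1)T) = −∫₀^T e^{A_e(T−ξ)}(B η(iT+ξ) + B_u w(iT+ξ)) dξ`. -/
theorem stmt11 {n m p : ℕ} (Ae : Matrix (Fin n) (Fin n) ℝ) (hAe : IsUnit Ae)
    (B : Matrix (Fin n) (Fin m) ℝ) (Bu : Matrix (Fin n) (Fin p) ℝ)
    (T : ℝ) (hT : 0 < T) (i : ℕ)
    (Φ : Matrix (Fin n) (Fin n) ℝ)
    (hΦ : Φ = Ae⁻¹ * (NormedSpace.exp (T • Ae) - 1)) (hΦunit : IsUnit Φ)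
    (xt : ℝ → (Fin n → ℝ)) (σ : Fin n → ℝ)
    (hσ : σ = -((Φ⁻¹ * NormedSpace.exp (T • Ae)).mulVec (xt ((i : ℝ) * T))))
    (η : ℝ → (Fin m → ℝ)) (w : ℝ → (Fin p → ℝ))
    (hη : Continuous η) (hw : Continuous w)
    (hode : ∀ t ∈ Set.Icc ((i : ℝ) * T) (((i : ℝ) + 1) * T),
      HasDerivAt xt (Ae.mulVec (xt t) + σ - B.mulVec (η t) - Bu.mulVec (w t)) t) :
    xt (((i : ℝ) + 1) * T) =
      -∫ ξ in (0:ℝ)..T, (NormedSpace.exp ((T - ξ) • Ae)).mulVec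
          (B.mulVec (η ((i : ℝ) * T + ξ)) + Bu.mulVec (w ((i : ℝ) * T + ξ))) := by
  letI : NormedRing (Matrix (Fin n) (Fin n) ℝ) := Matrix.linftyOpNormedRing
  letI : NormedAlgebra ℝ (Matrix (Fin n) (Fin n) ℝ) := Matrix.linftyOpNormedAlgebra
  letI : NormedAlgebra ℚ (Matrix (Fin n) (Fin n) ℝ) := NormedAlgebra.restrictScalars ℚ ℝ _
  set iT : ℝ := (i : ℝ) * T with hiT
  set E : ℝ → Matrix (Fin n) (Fin n) ℝ := fun s => NormedSpace.exp (s • Ae) with hE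
  -- the application map, as a continuous linear map
  let L : Matrix (Fin n) (Fin n) ℝ →L[ℝ] ((Fin n → ℝ) →L[ℝ] (Fin n → ℝ)) :=
    LinearMap.toContinuousLinearMap
      ((LinearMap.toContinuousLinearMap.toLinearMap).comp (Matrix.toLin'.toLinearMap))
  have hL : ∀ (M : Matrix (Fin n) (Fin n) ℝ) (v : Fin n → ℝ), L M v = M.mulVec v := by
    intro M v
    simp [L, Matrix.toLin'_apply]
  -- derivative of ξ ↦ E (T - ξ)
  have hEd : ∀ ξ : ℝ, HasDerivAt (fun u : ℝ => E (T - u)) (-(E (T - ξ) * Ae)) ξ := by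
    intro ξ
    have h1 := (hasDerivAt_exp_smul_const Ae (T - ξ)).scomp ξ ((hasDerivAt_id ξ).const_sub T)
    simp [hE, neg_one_smul] at h1 ⊢
    exact h1
  have hcontE : Continuous fun ξ : ℝ => E (T - ξ) :=
    NormedSpace.exp_continuous.comp ((continuous_const.sub continuous_id).smul continuous_const)
  -- derivative of ξ ↦ xt (iT + ξ)
  have hmem : ∀ ξ ∈ Set.uIcc (0:ℝ) T, iT + ξ ∈ Set.Icc ((i:ℝ) * T) (((i:ℝ) + 1) * T) := by
    intro ξ hξ
    rw [Set.uIcc_of_le hT.le] at hξ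
    constructor
    · simpa [hiT] using hξ.1
    · have : ((i:ℝ) + 1) * T = iT + T := by ring
      rw [this]
      exact add_le_add_right hξ.2 _
  have hX : ∀ ξ ∈ Set.uIcc (0:ℝ) T, HasDerivAt (fun u : ℝ => xt (iT + u))
      (Ae.mulVec (xt (iT + ξ)) + σ - B.mulVec (η (iT + ξ)) - Bu.mulVec (w (iT + ξ))) ξ := by
    intro ξ hξ
    have h1 := (hode (iT + ξ) (hmem ξ hξ)).scomp ξ ((hasDerivAt_id ξ).const_add iT)
    simp at h1
    exact h1
  -- combined derivative
  set f1 : ℝ → (Fin n → ℝ) := fun ξ => (E (T - ξ)).mulVec σ with hf1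
  set f2 : ℝ → (Fin n → ℝ) := fun ξ =>
    (E (T - ξ)).mulVec (B.mulVec (η (iT + ξ)) + Bu.mulVec (w (iT + ξ))) with hf2
  have hg : ∀ ξ ∈ Set.uIcc (0:ℝ) T,
      HasDerivAt (fun u : ℝ => (E (T - u)).mulVec (xt (iT + u))) (f1 ξ - f2 ξ) ξ := by
    intro ξ hξ
    have hc : HasDerivAt (fun u : ℝ => L (E (T - u))) (L (-(E (T - ξ) * Ae))) ξ :=
      L.hasFDerivAt.comp_hasDerivAt ξ (hEd ξ)
    have h2 := hc.clm_apply (hX ξ hξ)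
    have h3 : (fun u : ℝ => L (E (T - u)) (xt (iT + u)))
        = fun u : ℝ => (E (T - u)).mulVec (xt (iT + u)) := by
      funext u; exact hL _ _
    rw [h3] at h2
    refine h2.congr_deriv ?_
    rw [hL, hL]
    simp only [hf1, hf2, Matrix.neg_mulVec, Matrix.mulVec_add, Matrix.mulVec_sub,
      Matrix.mulVec_mulVec]
    abel
  -- FTC for the solution
  have hcont1 : Continuous f1 := hcontE.matrix_mulVec continuous_const
  have hcont2 : Continuous f2 := by
    apply hcontE.matrix_mulVec
    exact (Continuous.matrix_mulVec continuous_const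
        (hη.comp (continuous_const.add continuous_id))).add
      (Continuous.matrix_mulVec continuous_const (hw.comp (continuous_const.add continuous_id)))
  have key : (∫ ξ in (0:ℝ)..T, (f1 ξ - f2 ξ))
      = (E (T - T)).mulVec (xt (iT + T)) - (E (T - 0)).mulVec (xt (iT + 0)) :=
    intervalIntegral.integral_eq_sub_of_hasDerivAt hg
      ((hcont1.sub hcont2).intervalIntegrable 0 T)
  have hsplit : (∫ ξ in (0:ℝ)..T, (f1 ξ - f2 ξ))
      = (∫ ξ in (0:ℝ)..T, f1 ξ) - ∫ ξ in (0:ℝ)..T, f2 ξ :=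
    intervalIntegral.integral_sub (hcont1.intervalIntegrable 0 T)
      (hcont2.intervalIntegrable 0 T)
  -- FTC for the constant input term
  have hAedet : IsUnit Ae.det := (Matrix.isUnit_iff_isUnit_det Ae).mp hAe
  have hcomm : ∀ s : ℝ, E s * Ae = Ae * E s := by
    intro s
    exact (((Commute.refl Ae).smul_right s).exp_right).eq.symm
  have hainv : ∀ s : ℝ, Ae⁻¹ * (E s * Ae) = E s := by
    intro s
    rw [hcomm s, ← mul_assoc, Matrix.nonsing_inv_mul Ae hAedet, one_mul]
  have hh : ∀ ξ : ℝ, HasDerivAt (fun u : ℝ => -((Ae⁻¹ * E (T - u)).mulVec σ)) (f1 ξ) ξ := by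
    intro ξ
    have hc : HasDerivAt (fun u : ℝ => (L.comp (ContinuousLinearMap.mul ℝ _ Ae⁻¹)) (E (T - u)))
        ((L.comp (ContinuousLinearMap.mul ℝ _ Ae⁻¹)) (-(E (T - ξ) * Ae))) ξ :=
      (L.comp (ContinuousLinearMap.mul ℝ _ Ae⁻¹)).hasFDerivAt.comp_hasDerivAt ξ (hEd ξ)
    have h2 := (hc.clm_apply (hasDerivAt_const ξ σ)).neg
    have h3 : (fun u : ℝ => -((L.comp (ContinuousLinearMap.mul ℝ _ Ae⁻¹)) (E (T - u)) σ))
        = fun u : ℝ => -((Ae⁻¹ * E (T - u)).mulVec σ) := by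
      funext u
      exact congrArg Neg.neg (hL _ _)
    change HasDerivAt (fun u : ℝ => -((L.comp (ContinuousLinearMap.mul ℝ _ Ae⁻¹)) (E (T - u)) σ)) _ ξ at h2
    rw [h3] at h2
    refine h2.congr_deriv ?_
    simp only [ContinuousLinearMap.comp_apply, ContinuousLinearMap.mul_apply', hL,
      map_zero, add_zero, ContinuousLinearMap.zero_apply]
    simp [Matrix.mulVec_zero, hainv, hf1, Matrix.neg_mulVec]
    exact (hL (Ae⁻¹ * (E (T - ξ) * Ae)) σ).trans (by rw [hainv])
  have hkey2 : (∫ ξ in (0:ℝ)..T, f1 ξ)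
      = -((Ae⁻¹ * E (T - T)).mulVec σ) - -((Ae⁻¹ * E (T - 0)).mulVec σ) :=
    intervalIntegral.integral_eq_sub_of_hasDerivAt (fun ξ _ => hh ξ)
      (hcont1.intervalIntegrable 0 T)
  have hsimp2 : (∫ ξ in (0:ℝ)..T, f1 ξ) = Φ.mulVec σ := by
    rw [hkey2, hΦ]
    simp only [sub_self, sub_zero, hE, zero_smul, NormedSpace.exp_zero, mul_one]
    rw [mul_sub, mul_one, Matrix.sub_mulVec]
    abel
  -- the constant input term cancels the initial condition
  have hΦdet : IsUnit Φ.det := (Matrix.isUnit_iff_isUnit_det Φ).mp hΦunit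
  have hΦσ : Φ.mulVec σ = -((E T).mulVec (xt iT)) := by
    rw [hσ, Matrix.mulVec_neg, Matrix.mulVec_mulVec, ← mul_assoc,
      Matrix.mul_nonsing_inv Φ hΦdet, one_mul]
  -- assemble
  have hTT : (E (T - T)).mulVec (xt (iT + T)) = xt (((i:ℝ) + 1) * T) := by
    have : iT + T = ((i:ℝ) + 1) * T := by rw [hiT]; ring
    rw [this]
    simp [hE, Matrix.one_mulVec]
  have hT0 : (E (T - 0)).mulVec (xt (iT + 0)) = (E T).mulVec (xt iT) := by
    norm_num
  rw [hsplit, hTT, hT0, hsimp2, hΦσ] at key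
  have hJ : (∫ ξ in (0:ℝ)..T, f2 ξ)
      = ∫ ξ in (0:ℝ)..T, (NormedSpace.exp ((T - ξ) • Ae)).mulVec
          (B.mulVec (η ((i : ℝ) * T + ξ)) + Bu.mulVec (w ((i : ℝ) * T + ξ))) := rfl
  rw [← hJ]
  linear_combination -key
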